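/- arXiv:2306.03251 — 4 statements merged into one kernel-verified Lean document; each statement's English description precedes it below -/
import Mathlib

section
/- Let $\epsilon \in \mathbb{R}$. Let $D : (0,\infty) \times \mathbb{N} \to [0,\infty)$ be non-increasing in its first argument (i.e. $N \le N'$ implies $D(N',k) \le D(N,k)$ for every $k$), and let $F : (0,\infty) \times \mathbb{N} \to \mathbb{R}$ satisfy $\lim_{N_0 \to 0^+} \sup_{k \in \mathbb{N},\, 0 < N \le N_0} |F(N,k) - \epsilon| = 0$. Define $\Pi(N,k) := F(N,k) - D(N,k)$. Then the following are equivalent: (i) for every $N_0 > 0$, $\lim_{k \to \infty} D(N_0,k) = 0$; (ii) there exists a sequence $N_F : \mathbb{N} \to (0,\infty)$ with $\lim_{k \to \infty} N_F(k) = 0$ such that $\lim_{N_0 \to 0^+} \limsup_{k \to \infty} \sup_{N \in (N_F(k), N_0)} |\Pi(N,k) - \epsilon| = 0$ (where the supremum over an empty interval is interpreted as $0$). -/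
open Filter Topology

/-- Diagonal extraction: from pointwise decay of `D N ·` for every `N > 0`,
produce a sequence `NF k → 0` along which `D (NF k) k` is eventually small. -/
lemma diag_aux (D : ℝ → ℕ → ℝ)
    (h : ∀ N0 : ℝ, 0 < N0 → Tendsto (fun k => D N0 k) atTop (𝓝 0)) :
    ∃ NF : ℕ → ℝ, (∀ k, 0 < NF k) ∧
      ∀ δ > (0:ℝ), ∃ K : ℕ, ∀ k ≥ K, NF k ≤ δ ∧ D (NF k) k ≤ δ := by
  have hφ : ∀ n : ℕ, ∃ K : ℕ, ∀ k ≥ K, D (1 / (n + 1 : ℝ)) k ≤ 1 / (n + 1 : ℝ) := by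
    intro n
    have hpos : (0:ℝ) < 1 / (n + 1 : ℝ) := by positivity
    have := (Metric.tendsto_atTop.mp (h _ hpos)) (1 / (n + 1 : ℝ)) hpos
    obtain ⟨K, hK⟩ := this
    exact ⟨K, fun k hk => by
      have := hK k hk
      rw [Real.dist_eq, sub_zero] at this
      exact le_of_lt (lt_of_le_of_lt (le_abs_self _) this)⟩
  classical
  choose φ hφ using hφ
  -- f strictly increasing, f 0 = 0, f (n+1) ≥ φ n
  let f : ℕ → ℕ := fun n => Nat.rec 0 (fun m fm => max (fm + 1) (φ m)) n
  have hf0 : f 0 = 0 := rfl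
  have hfsucc : ∀ n, f (n + 1) = max (f n + 1) (φ n) := fun n => rfl
  have hfmono : StrictMono f := strictMono_nat_of_lt_succ (fun n => by
    rw [hfsucc]; exact lt_of_lt_of_le (Nat.lt_succ_self _) (le_max_left _ _))
  have hfge : ∀ n, n ≤ f n := fun n => hfmono.le_apply
  let m : ℕ → ℕ := fun k => @Nat.findGreatest (fun n => f n ≤ k) (fun n => Nat.decLe _ _) k
  have hmspec : ∀ k, f (m k) ≤ k := by
    intro k
    haveI : DecidablePred (fun n => f n ≤ k) := fun n => Nat.decLe _ _
    exact @Nat.findGreatest_spec 0 (fun n => f n ≤ k) (fun n => Nat.decLe _ _) k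
      (Nat.zero_le k) (by show f 0 ≤ k; rw [hf0]; exact Nat.zero_le k)
  refine ⟨fun k => if m k = 0 then 1 else 1 / (m k : ℝ), ?_, ?_⟩
  · intro k
    show (0:ℝ) < if m k = 0 then 1 else 1 / (m k : ℝ)
    by_cases hmk : m k = 0
    · rw [if_pos hmk]; norm_num
    · rw [if_neg hmk]
      have : (0:ℝ) < (m k : ℝ) := by
        exact_mod_cast Nat.pos_of_ne_zero hmk
      positivity
  · intro δ hδ
    obtain ⟨n, hn⟩ := exists_nat_one_div_lt hδ
    refine ⟨f (n + 1), fun k hk => ?_⟩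
    have hmk_ge : n + 1 ≤ m k := by
      exact @Nat.le_findGreatest (n+1) (fun j => f j ≤ k) (fun j => Nat.decLe _ _) k
        (le_trans (hfge (n+1)) hk) hk
    have hmk_ne : m k ≠ 0 := by omega
    have hmkpos : (0:ℝ) < (m k : ℝ) := by exact_mod_cast Nat.pos_of_ne_zero hmk_ne
    have hle : 1 / (m k : ℝ) ≤ 1 / (n + 1 : ℝ) := by
      apply one_div_le_one_div_of_le (by positivity)
      exact_mod_cast hmk_ge
    have hm1 : m k = (m k - 1) + 1 := (Nat.succ_pred_eq_of_pos (Nat.pos_of_ne_zero hmk_ne)).symm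
    have hkφ : φ (m k - 1) ≤ k := by
      have := hmspec k
      rw [hm1, hfsucc] at this
      exact le_trans (le_max_right _ _) this
    have hD : D (1 / ((m k - 1 : ℕ) + 1 : ℝ)) k ≤ 1 / ((m k - 1 : ℕ) + 1 : ℝ) :=
      hφ (m k - 1) k hkφ
    have hcast : ((m k - 1 : ℕ) : ℝ) + 1 = (m k : ℝ) := by
      exact_mod_cast (congrArg (Nat.cast : ℕ → ℝ) hm1).symm
    rw [hcast] at hD
    have hnδ : 1 / ((n:ℝ) + 1) ≤ δ := le_of_lt hn
    show (if m k = 0 then (1:ℝ) else 1 / (m k : ℝ)) ≤ δ ∧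
      D (if m k = 0 then (1:ℝ) else 1 / (m k : ℝ)) k ≤ δ
    rw [if_neg hmk_ne]
    constructor
    · calc 1 / (m k : ℝ) ≤ 1 / (n + 1 : ℝ) := hle
        _ ≤ δ := by exact_mod_cast hnδ
    · calc D (1 / (m k : ℝ)) k ≤ 1 / (m k : ℝ) := hD
        _ ≤ 1 / (n + 1 : ℝ) := hle
        _ ≤ δ := by exact_mod_cast hnδ

/-- Inverse cascade (Theorem 2.1, real-variable content).  `D N k` is the
wave-action dissipation above frequency `N` (non-negative, non-increasing in
`N`), `F N k` is the forcing input converging to `ε` uniformly in `k` as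
`N → 0⁺`, and `Pflux N k = F N k - D N k` is the normalized wave-action flux.
Then the full low-frequency dissipation anomaly (i) is equivalent to the
constant-flux law (ii) over an inertial range `(N_F(k), N₀)`.  The iterated
limits `lim_{N₀→0⁺} (sup / limsup / sup) = 0` are expressed in their
equivalent ε-characterizations (with the supremum over an empty interval
interpreted as `0`, i.e. the bound holds vacuously). -/

theorem inverse_cascade (ε : ℝ) (D F Pflux : ℝ → ℕ → ℝ)
    (hD0 : ∀ (N : ℝ) (k : ℕ), 0 < N → 0 ≤ D N k)
    (hDanti : ∀ (k : ℕ) (N N' : ℝ), 0 < N → N ≤ N' → D N' k ≤ D N k)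
    (hF : ∀ δ > (0:ℝ), ∃ M > (0:ℝ), ∀ (k : ℕ) (N : ℝ), 0 < N → N ≤ M →
      |F N k - ε| ≤ δ)
    (hPflux : ∀ (N : ℝ) (k : ℕ), Pflux N k = F N k - D N k) :
    (∀ N0 : ℝ, 0 < N0 → Tendsto (fun k => D N0 k) atTop (𝓝 0))
    ↔
    (∃ NF : ℕ → ℝ, (∀ k, 0 < NF k) ∧ Tendsto NF atTop (𝓝 0) ∧
      ∀ δ > (0:ℝ), ∃ M > (0:ℝ), ∀ N0 : ℝ, 0 < N0 → N0 ≤ M →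
        ∃ K : ℕ, ∀ k ≥ K, ∀ N : ℝ, NF k < N → N < N0 →
          |Pflux N k - ε| ≤ δ) := by
  constructor
  · intro h
    obtain ⟨NF, hNFpos, hNF⟩ := diag_aux D h
    refine ⟨NF, hNFpos, ?_, ?_⟩
    · rw [Metric.tendsto_atTop]
      intro δ hδ
      obtain ⟨K, hK⟩ := hNF (δ / 2) (by linarith)
      refine ⟨K, fun k hk => ?_⟩
      rw [Real.dist_eq, sub_zero, abs_of_pos (hNFpos k)]
      linarith [(hK k hk).1]
    · intro δ hδ
      obtain ⟨M, hM, hFM⟩ := hF (δ / 2) (by linarith)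
      refine ⟨M, hM, ?_⟩
      intro N0 hN0 hN0M
      obtain ⟨K, hK⟩ := hNF (δ / 2) (by linarith)
      refine ⟨K, fun k hk N hN1 hN2 => ?_⟩
      have hNpos : 0 < N := lt_trans (hNFpos k) hN1
      have hDk : D (NF k) k ≤ δ / 2 := (hK k hk).2
      have hDle : D N k ≤ D (NF k) k := hDanti k (NF k) N (hNFpos k) (le_of_lt hN1)
      have hDnn : 0 ≤ D N k := hD0 N k hNpos
      have hFb : |F N k - ε| ≤ δ / 2 := hFM k N hNpos (le_trans (le_of_lt hN2) hN0M)
      rw [hPflux, abs_le] at *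
      constructor <;> [linarith [hFb.1]; linarith [hFb.2]]
  · rintro ⟨NF, hNFpos, hNFtend, hii⟩ N0 hN0
    rw [Metric.tendsto_atTop]
    intro δ hδ
    obtain ⟨M1, hM1, hF1⟩ := hF (δ / 4) (by linarith)
    obtain ⟨M2, hM2, h2⟩ := hii (δ / 4) (by linarith)
    set N1 : ℝ := min M1 (min M2 N0) with hN1def
    have hN1pos : 0 < N1 := lt_min hM1 (lt_min hM2 hN0)
    have hN1M1 : N1 ≤ M1 := min_le_left _ _
    have hN1M2 : N1 ≤ M2 := le_trans (min_le_right _ _) (min_le_left _ _)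
    have hN1N0 : N1 ≤ N0 := le_trans (min_le_right _ _) (min_le_right _ _)
    obtain ⟨K1, hK1⟩ := h2 N1 hN1pos hN1M2
    obtain ⟨K2, hK2⟩ := Metric.tendsto_atTop.mp hNFtend N1 hN1pos
    refine ⟨max K1 K2, fun k hk => ?_⟩
    have hkK1 : k ≥ K1 := le_trans (le_max_left _ _) hk
    have hkK2 : k ≥ K2 := le_trans (le_max_right _ _) hk
    have hNFk : NF k < N1 := by
      have := hK2 k hkK2
      rw [Real.dist_eq, sub_zero, abs_of_pos (hNFpos k)] at this
      exact this
    set N : ℝ := (NF k + N1) / 2 with hNdef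
    have hNgt : NF k < N := by
      have := hNFpos k; rw [hNdef]; linarith
    have hNlt : N < N1 := by rw [hNdef]; linarith
    have hNpos : 0 < N := lt_trans (hNFpos k) hNgt
    have hP := hK1 k hkK1 N hNgt hNlt
    have hFv := hF1 k N hNpos (le_of_lt (lt_of_lt_of_le hNlt hN1M1))
    have hDN : D N k = F N k - Pflux N k := by rw [hPflux]; ring
    have hDle : D N0 k ≤ D N k :=
      hDanti k N N0 hNpos (le_trans (le_of_lt hNlt) hN1N0)
    have hDnn : 0 ≤ D N0 k := hD0 N0 k hN0
    rw [Real.dist_eq, sub_zero, abs_of_nonneg hDnn]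
    rw [abs_le] at hP hFv
    have : D N k ≤ δ / 2 := by rw [hDN]; linarith [hP.1, hFv.2]
    linarith
end

section
/- Let $\epsilon \in \mathbb{R}$. Let $D : (0,\infty) \times \mathbb{N} \to [0,\infty)$ be non-decreasing in its first argument (i.e. $N \le N'$ implies $D(N,k) \le D(N',k)$ for every $k$), and let $F : (0,\infty) \times \mathbb{N} \to \mathbb{R}$ satisfy $\lim_{N_0 \to \infty} \sup_{k \in \mathbb{N},\, N \ge N_0} |F(N,k) - \epsilon| = 0$. Define $\Pi(N,k) := F(N,k) - D(N,k)$. Then the following are equivalent: (i) for every $N_0 > 0$, $\lim_{k \to \infty} D(N_0,k) = 0$; (ii) there exists a sequence $N_D : \mathbb{N} \to (0,\infty)$ with $\lim_{k \to \infty} N_D(k) = \infty$ such that $\lim_{N_0 \to \infty} \limsup_{k \to \infty} \sup_{N \in (N_0, N_D(k))} |\Pi(N,k) - \epsilon| = 0$ (where the supremum over an empty interval is interpreted as $0$). -/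
open Filter Topology

/-- Direct cascade of kinetic energy (Theorem 2.2, real-variable content).
`D N k` is the kinetic energy dissipation below frequency `N` (non-negative,
non-decreasing in `N`), `F N k` the forcing input converging to `ε` uniformly
in `k` as `N → ∞`, and `Pflux N k = F N k - D N k` the normalized kinetic
energy flux.  The high-frequency dissipation anomaly (i) is equivalent to the
constant-flux law (ii) over an inertial range `(N₀, N_D(k))`.  Iterated limits
are expressed in their equivalent ε-characterizations (supremum over an empty
interval interpreted as `0`). -/
theorem direct_cascade (ε : ℝ) (D F Pflux : ℝ → ℕ → ℝ)
    (hD0 : ∀ (N : ℝ) (k : ℕ), 0 < N → 0 ≤ D N k)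
    (hDmono : ∀ (k : ℕ) (N N' : ℝ), 0 < N → N ≤ N' → D N k ≤ D N' k)
    (hF : ∀ δ > (0:ℝ), ∃ M > (0:ℝ), ∀ (k : ℕ) (N : ℝ), M ≤ N →
      |F N k - ε| ≤ δ)
    (hPflux : ∀ (N : ℝ) (k : ℕ), Pflux N k = F N k - D N k) :
    (∀ N0 : ℝ, 0 < N0 → Tendsto (fun k => D N0 k) atTop (𝓝 0))
    ↔
    (∃ ND : ℕ → ℝ, (∀ k, 0 < ND k) ∧ Tendsto ND atTop atTop ∧
      ∀ δ > (0:ℝ), ∃ M > (0:ℝ), ∀ N0 : ℝ, M ≤ N0 →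
        ∃ K : ℕ, ∀ k ≥ K, ∀ N : ℝ, N0 < N → N < ND k →
          |Pflux N k - ε| ≤ δ) := by
  constructor
  · intro hDiss
    -- choose thresholds g n such that D n k ≤ 1/n for k ≥ g n
    have hg : ∀ n : ℕ, ∃ gn : ℕ, ∀ k ≥ gn, 0 < n → D (n : ℝ) k ≤ 1 / (n : ℝ) := by
      intro n
      rcases Nat.eq_zero_or_pos n with h0 | hpos
      · exact ⟨0, fun k _ hn => absurd h0 (by omega)⟩
      · have hn : (0:ℝ) < n := by exact_mod_cast hpos
        obtain ⟨K, hK⟩ := (Metric.tendsto_atTop.mp (hDiss n hn)) (1 / n) (by positivity)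
        refine ⟨K, fun k hk _ => ?_⟩
        have := hK k hk
        rw [Real.dist_eq, sub_zero] at this
        exact le_of_lt (lt_of_le_of_lt (le_abs_self _) this)
    choose g hgspec using hg
    set Nn : ℕ → ℕ := fun k => Nat.findGreatest (fun n => n = 0 ∨ g n ≤ k) k with hNndef
    -- Nn k ≥ b for k large
    have hNnge : ∀ b : ℕ, ∀ k, max b (g b) ≤ k → b ≤ Nn k := by
      intro b k hk
      have : b ≤ Nat.findGreatest (fun n => n = 0 ∨ g n ≤ k) k :=
        Nat.le_findGreatest (le_trans (le_max_left _ _) hk)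
          (Or.inr (le_trans (le_max_right _ _) hk))
      exact this
    have hNnspec : ∀ k, Nn k = 0 ∨ g (Nn k) ≤ k := by
      intro k
      have h := Nat.findGreatest_spec (P := fun n => n = 0 ∨ g n ≤ k) (m := 0)
        (Nat.zero_le k) (Or.inl rfl)
      exact h
    -- key dissipation bound
    have hkey : ∀ k : ℕ, 1 ≤ Nn k → D ((Nn k : ℕ) : ℝ) k ≤ 1 / ((Nn k : ℕ) : ℝ) := by
      intro k h1
      rcases hNnspec k with h0 | hle
      · omega
      · exact hgspec (Nn k) k hle (by omega)
    have hNntop : Tendsto Nn atTop atTop := by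
      refine tendsto_atTop_atTop.mpr fun b => ⟨max b (g b), fun k hk => hNnge b k hk⟩
    refine ⟨fun k => max 1 ((Nn k : ℕ) : ℝ), fun k => lt_of_lt_of_le one_pos (le_max_left _ _),
      ?_, ?_⟩
    · refine tendsto_atTop_mono (fun k => le_max_right _ _) ?_
      exact tendsto_natCast_atTop_atTop.comp hNntop
    · intro δ hδ
      obtain ⟨M₁, hM₁pos, hM₁⟩ := hF (δ/2) (by linarith)
      refine ⟨M₁, hM₁pos, ?_⟩
      intro N0 hN0
      obtain ⟨n₀', hn₀'⟩ := exists_nat_ge (2/δ)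
      set n₀ : ℕ := max 1 n₀' with hn₀def
      have hn₀pos : (0:ℝ) < n₀ := by
        have : 1 ≤ n₀ := le_max_left _ _
        exact_mod_cast this
      have hn₀ge : (2/δ : ℝ) ≤ n₀ := le_trans hn₀' (by exact_mod_cast le_max_right 1 n₀')
      have hn₀inv : 1 / (n₀ : ℝ) ≤ δ/2 := by
        rw [div_le_iff₀ hn₀pos]
        rw [div_le_iff₀ hδ] at hn₀ge
        nlinarith
      refine ⟨max n₀ (g n₀), fun k hk N hN1 hN2 => ?_⟩
      have hNnk : n₀ ≤ Nn k := hNnge n₀ k hk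
      have h1 : 1 ≤ Nn k := le_trans (le_max_left 1 n₀') hNnk
      have h1R : (1:ℝ) ≤ ((Nn k : ℕ) : ℝ) := by exact_mod_cast h1
      have hmax : max 1 ((Nn k : ℕ) : ℝ) = ((Nn k : ℕ) : ℝ) := max_eq_right h1R
      simp only at hN2
      rw [hmax] at hN2
      have hNpos : 0 < N := lt_of_lt_of_le hM₁pos (le_trans hN0 (le_of_lt hN1))
      have hDN : D N k ≤ 1 / ((Nn k : ℕ) : ℝ) :=
        le_trans (hDmono k N _ hNpos (le_of_lt hN2)) (hkey k h1)
      have hNninv : 1 / ((Nn k : ℕ) : ℝ) ≤ 1 / (n₀ : ℝ) := by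
        apply one_div_le_one_div_of_le hn₀pos
        exact_mod_cast hNnk
      have hDN2 : D N k ≤ δ/2 := le_trans hDN (le_trans hNninv hn₀inv)
      have hFb := hM₁ k N (le_trans hN0 (le_of_lt hN1))
      have hFb' := abs_le.mp hFb
      have hDnn := hD0 N k hNpos
      rw [hPflux, abs_le]
      constructor <;> linarith [hFb'.1, hFb'.2]
  · rintro ⟨ND, hNDpos, hNDtop, hND⟩ N0 hN0
    rw [Metric.tendsto_atTop]
    intro η hη
    obtain ⟨M, hMpos, hM⟩ := hND (η/4) (by linarith)
    obtain ⟨M₂, hM₂pos, hM₂⟩ := hF (η/4) (by linarith)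
    set A : ℝ := max M M₂ with hAdef
    obtain ⟨K, hK⟩ := hM A (le_max_left _ _)
    set Ns : ℝ := max A N0 + 1 with hNsdef
    have hANs : A < Ns := lt_of_le_of_lt (le_max_left A N0) (lt_add_one _)
    have hN0Ns : N0 < Ns := lt_of_le_of_lt (le_max_right A N0) (lt_add_one _)
    obtain ⟨K₂, hK₂⟩ := (tendsto_atTop.mp hNDtop) (Ns + 1) |>.exists_forall_of_atTop
    refine ⟨max K K₂, fun k hk => ?_⟩
    have hkK : K ≤ k := le_trans (le_max_left _ _) hk
    have hkK₂ : K₂ ≤ k := le_trans (le_max_right _ _) hk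
    have hNDk : Ns < ND k := by
      have := hK₂ k hkK₂
      linarith
    have hP := hK k hkK Ns hANs hNDk
    have hFb := hM₂ k Ns (le_trans (le_max_right M M₂) (le_of_lt hANs))
    have hDNs : D Ns k ≤ η/2 := by
      have hP' := abs_le.mp hP
      have hFb' := abs_le.mp hFb
      rw [hPflux] at hP'
      linarith [hP'.1, hP'.2, hFb'.1, hFb'.2]
    have hmono := hDmono k N0 Ns hN0 (le_of_lt hN0Ns)
    have hnn := hD0 N0 k hN0
    rw [Real.dist_eq, sub_zero, abs_of_nonneg hnn]
    linarith
end

section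
/- Let $D : (0,\infty) \times \mathbb{N} \to [0,\infty)$ be non-increasing in its first argument with $\liminf_{k \to \infty} D(N,k) < \infty$ for some $N > 0$, and let $R : (0,\infty) \times \mathbb{N} \to \mathbb{R}$ satisfy $\lim_{N_0 \to \infty} \sup_{k \in \mathbb{N},\, N \ge N_0} |R(N,k)| = 0$. Let $E : (0,\infty) \times \mathbb{N} \to [0,\infty)$ and $G : (0,\infty) \times \mathbb{N} \to \mathbb{R}$ satisfy $\lim_{k \to \infty} \sup_{N > 0} E(N,k) = 0$ and $\lim_{k \to \infty} \sup_{N > 0} |G(N,k)| = 0$. Define $\Pi(N,k) := D(N,k) + R(N,k) - E(N,k) + G(N,k)$ and $\epsilon^\star := \inf_{N > 0} \liminf_{k \to \infty} D(N,k)$. Then there exists a sequence $N_D : \mathbb{N} \to (0,\infty)$ with $\lim_{k \to \infty} N_D(k) = \infty$ such that $\liminf_{N_0 \to \infty} \limsup_{k \to \infty} \inf_{N \in (N_0, N_D(k))} \Pi(N,k) \ge \epsilon^\star$ (infimum over an empty interval interpreted as $+\infty$, or the inequality required only along $k$ with $N_0 < N_D(k)$). -/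
open Filter Topology

/-- Partial direct cascade (Theorem 4.2, real-variable content).  `D N k` is
the kinetic energy dissipation above frequency `N` (non-negative,
non-increasing in `N`, with finite liminf for some `N > 0`), `R` a forcing
error vanishing uniformly in `k` as `N → ∞`, `E ≥ 0` the potential-energy
dissipation terms and `G` the Itô correction, both vanishing uniformly in
`N > 0` as `k → ∞`, and `Pflux = D + R - E + G` the normalized Hamiltonian
flux.  With `ε⋆ = inf_{N>0} liminf_k D(N,k)`, there exists `N_D(k) → ∞`
(positive) such that
`liminf_{N₀→∞} limsup_k inf_{N ∈ (N₀,N_D(k))} Pflux(N,k) ≥ ε⋆`.  The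
liminf/limsup/inf are computed in `EReal`; the infimum over an empty interval
is `⊤ = +∞`. -/
theorem partial_direct_cascade (D R E G Pflux : ℝ → ℕ → ℝ)
    (hD0 : ∀ (N : ℝ) (k : ℕ), 0 < N → 0 ≤ D N k)
    (hDanti : ∀ (k : ℕ) (N N' : ℝ), 0 < N → N ≤ N' → D N' k ≤ D N k)
    (hfin : ∃ N : ℝ, 0 < N ∧
      Filter.liminf (fun k => (D N k : EReal)) atTop < ⊤)
    (hR : ∀ δ > (0:ℝ), ∃ M > (0:ℝ), ∀ (k : ℕ) (N : ℝ), M ≤ N →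
      |R N k| ≤ δ)
    (hE0 : ∀ (N : ℝ) (k : ℕ), 0 < N → 0 ≤ E N k)
    (hE : ∀ δ > (0:ℝ), ∃ K : ℕ, ∀ k ≥ K, ∀ N : ℝ, 0 < N → E N k ≤ δ)
    (hG : ∀ δ > (0:ℝ), ∃ K : ℕ, ∀ k ≥ K, ∀ N : ℝ, 0 < N → |G N k| ≤ δ)
    (hPflux : ∀ (N : ℝ) (k : ℕ),
      Pflux N k = D N k + R N k - E N k + G N k) :
    ∃ ND : ℕ → ℝ, (∀ k, 0 < ND k) ∧ Tendsto ND atTop atTop ∧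
      (⨅ (N : ℝ) (_ : 0 < N), Filter.liminf (fun k => (D N k : EReal)) atTop)
        ≤ Filter.liminf
            (fun N0 : ℝ => Filter.limsup
              (fun k => ⨅ N ∈ Set.Ioo N0 (ND k), (Pflux N k : EReal)) atTop)
            atTop := by
  classical
  set ε : EReal :=
    ⨅ (N : ℝ) (_ : 0 < N), Filter.liminf (fun k => (D N k : EReal)) atTop with hε
  -- ε is a finite extended real
  have hε0 : (0 : EReal) ≤ ε := by
    refine le_iInf fun N => le_iInf fun hN => ?_
    refine le_liminf_of_le (by isBoundedDefault) ?_
    exact Eventually.of_forall fun k => by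
      exact_mod_cast (hD0 N k hN)
  obtain ⟨N₁, hN₁, hN₁fin⟩ := hfin
  have hεtop : ε < ⊤ := lt_of_le_of_lt (by exact iInf₂_le N₁ hN₁) hN₁fin
  have hεbot : ε ≠ ⊥ := fun h => by simp [h] at hε0
  set e : ℝ := ε.toReal with he
  have hεe : ε = (e : EReal) := (EReal.coe_toReal hεtop.ne hεbot).symm
  -- diagonal extraction: for every m, eventually D(m+1,k) > e - 1/(m+1)
  have hdiag : ∀ m : ℕ, ∃ K : ℕ, ∀ k ≥ K,
      e - 1 / (m + 1 : ℝ) < D ((m : ℝ) + 1) k := by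
    intro m
    have hlt : ((e - 1 / (m + 1 : ℝ) : ℝ) : EReal)
        < Filter.liminf (fun k => (D ((m : ℝ) + 1) k : EReal)) atTop := by
      have h1 : ((e - 1 / (m + 1 : ℝ) : ℝ) : EReal) < ((e : ℝ) : EReal) := by
        exact_mod_cast show (e - 1 / (m + 1 : ℝ)) < e by
          have : (0 : ℝ) < 1 / (m + 1 : ℝ) := by positivity
          linarith
      have h2 : ((e : ℝ) : EReal)
          ≤ Filter.liminf (fun k => (D ((m : ℝ) + 1) k : EReal)) atTop := by
        rw [← hεe]
        exact iInf₂_le ((m : ℝ) + 1) (by positivity)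
      exact h1.trans_le h2
    have := eventually_lt_of_lt_liminf hlt
    rw [eventually_atTop] at this
    obtain ⟨K, hK⟩ := this
    exact ⟨K, fun k hk => by exact_mod_cast hK k hk⟩
  choose g hg using hdiag
  -- monotone majorant of g
  set Gm : ℕ → ℕ := fun m => m + (Finset.range (m + 1)).sup g with hGm
  have hGmono : Monotone Gm := by
    intro a b hab
    exact add_le_add hab (Finset.sup_mono (by
      exact Finset.range_subset_range.mpr (by omega)))
  have hGge : ∀ m, g m ≤ Gm m := fun m =>
    le_add_of_nonneg_of_le (Nat.zero_le _)
      (Finset.le_sup (Finset.self_mem_range_succ m))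
  -- the slowly growing sequence
  set S : ℕ → Finset ℕ := fun k =>
    (Finset.range (k + 1)).filter (fun m => Gm m ≤ k) with hS
  set ND' : ℕ → ℕ := fun k => (S k).sup id + 1 with hND'
  set ND : ℕ → ℝ := fun k => ((ND' k : ℕ) : ℝ) with hND
  have hmemS : ∀ m k, Gm m ≤ k → m ∈ S k := by
    intro m k hmk
    have hm : m ≤ k := le_trans (Nat.le_add_right m _) hmk
    exact Finset.mem_filter.mpr ⟨Finset.mem_range.mpr (by omega), hmk⟩
  have hNDge : ∀ m k, Gm m ≤ k → m + 1 ≤ ND' k := by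
    intro m k hmk
    have := Finset.le_sup (f := id) (hmemS m k hmk)
    simpa [hND'] using Nat.succ_le_succ this
  have hNDpos : ∀ k, 0 < ND k := fun k => by
    have h : (0 : ℕ) < ND' k := Nat.succ_pos _
    show (0 : ℝ) < ((ND' k : ℕ) : ℝ)
    exact_mod_cast h
  have hNDtend : Tendsto ND atTop atTop := by
    rw [tendsto_atTop_atTop]
    intro b
    obtain ⟨m, hm⟩ := exists_nat_ge b
    refine ⟨Gm m, fun k hk => ?_⟩
    have h1 : m + 1 ≤ ND' k := hNDge m k hk
    have : (m : ℝ) ≤ (ND' k : ℝ) := by exact_mod_cast le_trans (Nat.le_succ m) h1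
    calc b ≤ (m : ℝ) := hm
      _ ≤ ND k := this
  -- key property: for k ≥ Gm 0, D (ND k) k > e - 1/(ND k)
  have hkey : ∀ k, Gm 0 ≤ k → e - 1 / (ND k) < D (ND k) k := by
    intro k hk
    have hSne : (S k).Nonempty := ⟨0, hmemS 0 k hk⟩
    obtain ⟨M, hM, hMsup⟩ := Finset.exists_mem_eq_sup (S k) hSne id
    have hMk : Gm M ≤ k := (Finset.mem_filter.mp hM).2
    have hgk : g M ≤ k := le_trans (hGge M) hMk
    have := hg M k hgk
    have hNDk : ND k = (M : ℝ) + 1 := by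
      have h : ND' k = M + 1 := by
        show (S k).sup id + 1 = M + 1
        rw [hMsup]; rfl
      show ((ND' k : ℕ) : ℝ) = (M : ℝ) + 1
      rw [h]; push_cast; ring
    rw [hNDk]
    exact this
  refine ⟨ND, hNDpos, hNDtend, ?_⟩
  -- main estimate via le_liminf_iff
  rw [le_liminf_iff]
  intro c hc
  rw [hεe] at hc
  obtain ⟨d, hcd, hde⟩ := EReal.exists_between_coe_real hc
  have hde' : d < e := by exact_mod_cast hde
  set δ : ℝ := (e - d) / 4 with hδ
  have hδpos : 0 < δ := by simp [hδ]; linarith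
  obtain ⟨MR, hMRpos, hMR⟩ := hR δ hδpos
  obtain ⟨KE, hKE⟩ := hE δ hδpos
  obtain ⟨KG, hKG⟩ := hG δ hδpos
  obtain ⟨m₀, hm₀⟩ := exists_nat_gt (1 / δ)
  have hm₀δ : 1 / ((m₀ : ℝ) + 1) ≤ δ := by
    rw [div_le_iff₀ (by positivity)]
    have h1 : 1 / δ < (m₀ : ℝ) + 1 := lt_of_lt_of_le hm₀ (by linarith)
    rw [div_lt_iff₀ hδpos] at h1
    nlinarith
  -- eventually in N0
  filter_upwards [eventually_ge_atTop (max MR 1)] with N0 hN0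
  refine lt_of_lt_of_le hcd ?_
  -- show d ≤ limsup
  have hev : ∀ᶠ k in atTop,
      (d : EReal) ≤ ⨅ N ∈ Set.Ioo N0 (ND k), (Pflux N k : EReal) := by
    filter_upwards [eventually_ge_atTop (max (max KE KG) (Gm m₀))] with k hk
    have hkE : KE ≤ k := le_trans (le_trans (le_max_left _ _) (le_max_left _ _)) hk
    have hkG : KG ≤ k := le_trans (le_trans (le_max_right _ _) (le_max_left _ _)) hk
    have hkGm : Gm m₀ ≤ k := le_trans (le_max_right _ _) hk
    have hkGm0 : Gm 0 ≤ k := le_trans (hGmono (Nat.zero_le m₀)) hkGm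
    have hNDbig : (m₀ : ℝ) + 1 ≤ ND k := by
      have h := hNDge m₀ k hkGm
      show (m₀ : ℝ) + 1 ≤ ((ND' k : ℕ) : ℝ)
      exact_mod_cast h
    have hDlow : e - δ ≤ D (ND k) k := by
      have h1 := hkey k hkGm0
      have h2 : 1 / ND k ≤ 1 / ((m₀ : ℝ) + 1) :=
        one_div_le_one_div_of_le (by positivity) hNDbig
      linarith [le_trans h2 hm₀δ]
    refine le_iInf₂ fun N hN => ?_
    obtain ⟨hN0N, hNND⟩ := hN
    have hNpos : 0 < N :=
      lt_of_lt_of_le (lt_of_lt_of_le one_pos (le_trans (le_max_right MR 1) hN0)) hN0N.le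
    have hDN : D (ND k) k ≤ D N k := hDanti k N (ND k) hNpos hNND.le
    have hRN : |R N k| ≤ δ :=
      hMR k N (le_trans (le_trans (le_max_left MR 1) hN0) hN0N.le)
    have hEN : E N k ≤ δ := hKE k hkE N hNpos
    have hGN : |G N k| ≤ δ := hKG k hkG N hNpos
    have : d ≤ Pflux N k := by
      rw [hPflux]
      have h1 : -δ ≤ R N k := neg_le_of_abs_le hRN
      have h2 : -δ ≤ G N k := neg_le_of_abs_le hGN
      have : e - 4 * δ = d := by rw [hδ]; ring
      linarith
    exact_mod_cast this
  exact le_limsup_of_frequently_le hev.frequently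
end

section
/- Let $d \ge 1$ be an integer, let $\lambda \ge 1$ be a real number, and let $\psi : \mathbb{R}^d \to \mathbb{C}$ be Lipschitz with constant $L$ and vanish outside the closed Euclidean ball of radius $2$ centered at the origin. Then there is a constant $C_d$ depending only on $d$ (one may take $C_d = \frac{\pi}{2}\left(\frac{7}{2\pi}\right)^d$) such that for every $1 \le j \le d$ and every $x \in \mathbb{R}^d$ with $0 < |x_j| \le \pi\lambda$, $|x_j| \cdot \left| \frac{1}{(2\pi\lambda)^d} \sum_{m \in \mathbb{Z}^d} \psi(m/\lambda)\, e^{i (m/\lambda) \cdot x} \right| \le C_d\, L$. -/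
open Filter Topology

/-- Uniform-in-`λ` first-moment decay bound on the inverse Fourier transform
of a Lipschitz cutoff (proof of Bernstein's inequalities, Lemma A.1): if `ψ`
is Lipschitz with constant `L` (for the Euclidean distance) and vanishes
outside the Euclidean ball of radius `2`, then for `λ ≥ 1`, every `1 ≤ j ≤ d`
and every `x` with `0 < |x_j| ≤ πλ`,
`|x_j| · |(2πλ)^{-d} ∑_{m ∈ ℤ^d} ψ(m/λ) e^{i (m/λ)·x}| ≤ (π/2)(7/(2π))^d L`. -/
theorem inverse_fourier_moment_bound (d : ℕ) (hd : 1 ≤ d)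
    (lam : ℝ) (hlam : 1 ≤ lam) (ψ : (Fin d → ℝ) → ℂ)
    (L : ℝ) (hL : 0 ≤ L)
    (hlip : ∀ y z : Fin d → ℝ,
      ‖ψ y - ψ z‖ ≤ L * Real.sqrt (∑ i, (y i - z i) ^ 2))
    (hsupp : ∀ y : Fin d → ℝ, 2 < Real.sqrt (∑ i, (y i) ^ 2) → ψ y = 0)
    (j : Fin d) (x : Fin d → ℝ)
    (hx0 : 0 < |x j|) (hxpi : |x j| ≤ Real.pi * lam) :
    |x j| * ‖(((1 / (2 * Real.pi * lam)) ^ d : ℝ) : ℂ) *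
        ∑ᶠ m : Fin d → ℤ, ψ (fun i => (m i : ℝ) / lam) *
          Complex.exp (((∑ i, (m i : ℝ) / lam * x i : ℝ) : ℂ) * Complex.I)‖
      ≤ Real.pi / 2 * (7 / (2 * Real.pi)) ^ d * L := by
  have hlam0 : (0:ℝ) < lam := lt_of_lt_of_le one_pos hlam
  have hπ : (0:ℝ) < Real.pi := Real.pi_pos
  set K : ℤ := ⌊2 * lam⌋ with hKdef
  have hKle : (K:ℝ) ≤ 2*lam := Int.floor_le _
  have hKgt : 2*lam < (K:ℝ) + 1 := Int.lt_floor_add_one _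
  set B : Finset (Fin d → ℤ) := Fintype.piFinset fun _ => Finset.Icc (-K) (K+1) with hBdef
  set u : Fin d → ℤ := Pi.single j 1 with hudef
  set E : (Fin d → ℤ) → ℂ := fun m =>
    Complex.exp (((∑ i, (m i : ℝ) / lam * x i : ℝ) : ℂ) * Complex.I) with hEdef
  set F : (Fin d → ℤ) → ℂ := fun m => ψ (fun i => (m i:ℝ)/lam) * E m with hFdef
  set G : (Fin d → ℤ) → ℂ := fun m => ψ (fun i => ((m i - u i : ℤ):ℝ)/lam) * E m with hGdef
  -- coordinate bound from the support hypothesis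
  have hcoord : ∀ (y : Fin d → ℝ), ψ y ≠ 0 → ∀ i, |y i| ≤ 2 := by
    intro y hy i
    by_contra h
    push_neg at h
    apply hy
    apply hsupp
    calc (2:ℝ) < |y i| := h
      _ = Real.sqrt ((y i)^2) := (Real.sqrt_sq_eq_abs _).symm
      _ ≤ Real.sqrt (∑ i, (y i)^2) := Real.sqrt_le_sqrt
          (Finset.single_le_sum (fun i _ => sq_nonneg (y i)) (Finset.mem_univ i))
  have hmem : ∀ a : ℤ, |(a:ℝ)| ≤ 2*lam → a ∈ Finset.Icc (-K) (K+1) := by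
    intro a ha
    rw [abs_le] at ha
    rw [Finset.mem_Icc]
    constructor
    · have : (-a : ℤ) ≤ K := Int.le_floor.mpr (by push_cast; linarith [ha.1])
      omega
    · have : a ≤ K := Int.le_floor.mpr (by push_cast; linarith [ha.2])
      omega
  have hmem' : ∀ a : ℤ, |(a:ℝ) - 1| ≤ 2*lam → a ∈ Finset.Icc (-K) (K+1) := by
    intro a ha
    rw [abs_le] at ha
    rw [Finset.mem_Icc]
    constructor
    · have : (-a : ℤ) ≤ K := Int.le_floor.mpr (by push_cast; linarith [ha.1, hlam0])
      omega
    · have : a - 1 ≤ K := Int.le_floor.mpr (by push_cast; linarith [ha.2])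
      omega
  -- supports
  have hFpsi : ∀ m : Fin d → ℤ, F m ≠ 0 → ψ (fun i => (m i:ℝ)/lam) ≠ 0 := by
    intro m hm h0
    apply hm
    simp [hFdef, h0]
  have hGpsi : ∀ m : Fin d → ℤ, G m ≠ 0 → ψ (fun i => ((m i - u i : ℤ):ℝ)/lam) ≠ 0 := by
    intro m hm h0
    apply hm
    simp only [hGdef]
    rw [h0, zero_mul]
  have hFs : Function.support F ⊆ (B : Set (Fin d → ℤ)) := by
    intro m hm
    have h := hcoord _ (hFpsi m hm)
    simp only [hBdef, Finset.coe_sort_coe, Finset.mem_coe, Fintype.mem_piFinset]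
    intro i
    apply hmem
    have := h i
    rw [abs_div, abs_of_pos hlam0, div_le_iff₀ hlam0] at this
    linarith [this]
  have hGs : Function.support G ⊆ (B : Set (Fin d → ℤ)) := by
    intro m hm
    have h := hcoord _ (hGpsi m hm)
    simp only [hBdef, Finset.coe_sort_coe, Finset.mem_coe, Fintype.mem_piFinset]
    intro i
    have hi := h i
    rw [abs_div, abs_of_pos hlam0, div_le_iff₀ hlam0] at hi
    rcases eq_or_ne i j with rfl | hij
    · apply hmem'
      have hu : u i = 1 := by simp [hudef]
      have hc : ((m i - u i : ℤ) : ℝ) = (m i:ℝ) - 1 := by rw [hu]; push_cast; ring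
      rwa [hc] at hi
    · apply hmem
      have hu : u i = 0 := by simp [hudef, hij]
      have hc : ((m i - u i : ℤ) : ℝ) = (m i:ℝ) := by rw [hu]; push_cast; ring
      rwa [hc] at hi
  have hGshift : Function.support (fun m => G (m + u)) ⊆ (B : Set (Fin d → ℤ)) := by
    intro m hm
    have h := hcoord _ (hGpsi _ hm)
    simp only [hBdef, Finset.coe_sort_coe, Finset.mem_coe, Fintype.mem_piFinset]
    intro i
    apply hmem
    have hi := h i
    have : (m + u) i - u i = m i := by simp [Pi.add_apply]
    rw [this] at hi
    rw [abs_div, abs_of_pos hlam0, div_le_iff₀ hlam0] at hi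
    linarith [hi]
  -- the exp shift identity
  have hsum_u : ∀ m : Fin d → ℤ, (∑ i, ((m i + u i : ℤ):ℝ)/lam * x i)
      = (∑ i, (m i:ℝ)/lam * x i) + x j / lam := by
    intro m
    have : ∀ i, ((m i + u i : ℤ):ℝ)/lam * x i
        = (m i:ℝ)/lam * x i + (u i:ℝ)/lam * x i := by
      intro i; push_cast; ring
    rw [Finset.sum_congr rfl fun i _ => this i, Finset.sum_add_distrib]
    congr 1
    rw [Finset.sum_eq_single j]
    · simp [hudef]; ring
    · intro i _ hij
      simp [hudef, hij]
    · intro h; exact absurd (Finset.mem_univ j) h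
  have hshift : ∀ m : Fin d → ℤ,
      F m * Complex.exp (((x j / lam : ℝ):ℂ) * Complex.I) = G (m + u) := by
    intro m
    simp only [hFdef, hGdef, hEdef]
    have harg : (fun i => (((m + u) i - u i : ℤ):ℝ)/lam) = fun i => (m i:ℝ)/lam := by
      funext i; simp [Pi.add_apply]
    rw [harg, mul_assoc]
    congr 1
    rw [← Complex.exp_add]
    congr 1
    have : (∑ i, ((m + u) i : ℝ) / lam * x i : ℝ) = (∑ i, (m i:ℝ)/lam * x i) + x j / lam := by
      have := hsum_u m
      simpa [Pi.add_apply] using this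
    rw [this]
    push_cast
    ring
  -- from finsum to finset sums
  set S : ℂ := ∑ᶠ m : Fin d → ℤ, F m with hSdef
  have hSB : S = ∑ m ∈ B, F m := finsum_eq_sum_of_support_subset F hFs
  have hGB : ∑ᶠ m : Fin d → ℤ, G m = ∑ m ∈ B, G m := finsum_eq_sum_of_support_subset G hGs
  have hstep : S * Complex.exp (((x j / lam : ℝ):ℂ) * Complex.I) = ∑ m ∈ B, G m := by
    rw [hSB, Finset.sum_mul]
    rw [Finset.sum_congr rfl fun m _ => hshift m]
    rw [← finsum_eq_sum_of_support_subset _ hGshift]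
    rw [← hGB]
    exact finsum_comp_equiv (Equiv.addRight u)
  -- Lipschitz bound on each term of the difference
  have hterm : ∀ m : Fin d → ℤ, ‖G m - F m‖ ≤ L / lam := by
    intro m
    have : G m - F m = (ψ (fun i => ((m i - u i : ℤ):ℝ)/lam) - ψ (fun i => (m i:ℝ)/lam)) * E m := by
      simp only [hFdef, hGdef]; ring
    rw [this, norm_mul]
    have hE1 : ‖E m‖ = 1 := by
      simp only [hEdef]
      exact Complex.norm_exp_ofReal_mul_I _
    rw [hE1, mul_one]
    refine le_trans (hlip _ _) ?_
    have hsq : (∑ i, (((m i - u i : ℤ):ℝ)/lam - (m i:ℝ)/lam) ^ 2) = (1/lam)^2 := by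
      have : ∀ i, (((m i - u i : ℤ):ℝ)/lam - (m i:ℝ)/lam) ^ 2 = ((u i:ℝ)/lam)^2 := by
        intro i; push_cast; ring
      rw [Finset.sum_congr rfl fun i _ => this i]
      rw [Finset.sum_eq_single j]
      · simp [hudef]
      · intro i _ hij; simp [hudef, hij]
      · intro h; exact absurd (Finset.mem_univ j) h
    rw [hsq, Real.sqrt_sq (by positivity)]
    rw [mul_one_div]
  -- sum bound
  have hcardB : (B.card : ℝ) ≤ (7*lam)^d := by
    have h1 : B.card = ((Finset.Icc (-K) (K+1)).card) ^ d := by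
      rw [hBdef, Fintype.card_piFinset]
      simp
    rw [h1]
    have h2 : ((Finset.Icc (-K) (K+1)).card : ℝ) ≤ 7 * lam := by
      rw [Int.card_Icc]
      have hKnn : 0 ≤ K := Int.le_floor.mpr (by push_cast; linarith)
      have h5 : (((K + 1 + 1 - (-K)).toNat : ℕ) : ℤ) = 2*K + 2 := by omega
      have h4 : (((K + 1 + 1 - (-K)).toNat : ℕ) : ℝ) = 2*(K:ℝ) + 2 := by
        exact_mod_cast congrArg (fun z : ℤ => (z:ℝ)) h5
      rw [h4]
      linarith
    push_cast
    exact pow_le_pow_left₀ (by positivity) h2 d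
  have hdiff : ‖S * (Complex.exp (((x j / lam : ℝ):ℂ) * Complex.I) - 1)‖
      ≤ (7*lam)^d * (L / lam) := by
    have : S * (Complex.exp (((x j / lam : ℝ):ℂ) * Complex.I) - 1)
        = ∑ m ∈ B, (G m - F m) := by
      rw [mul_sub, mul_one, hstep, hSB, Finset.sum_sub_distrib]
    rw [this]
    calc ‖∑ m ∈ B, (G m - F m)‖
        ≤ ∑ m ∈ B, ‖G m - F m‖ := norm_sum_le _ _
      _ ≤ ∑ _m ∈ B, (L / lam) := Finset.sum_le_sum fun m _ => hterm m
      _ = (B.card : ℝ) * (L / lam) := by rw [Finset.sum_const, nsmul_eq_mul]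
      _ ≤ (7*lam)^d * (L / lam) := by
          apply mul_le_mul_of_nonneg_right hcardB (by positivity)
  -- lower bound on |e^{iθ} - 1|
  set θ : ℝ := x j / lam with hθdef
  have hθabs : |θ| = |x j| / lam := by rw [hθdef, abs_div, abs_of_pos hlam0]
  have hθpi : |θ| ≤ Real.pi := by
    rw [hθabs, div_le_iff₀ hlam0]; linarith [hxpi]
  have hlow : 2 / Real.pi * |θ| ≤ ‖Complex.exp ((θ:ℂ) * Complex.I) - 1‖ := by
    have hre : (Complex.exp ((θ:ℂ) * Complex.I) - 1).re = Real.cos θ - 1 := by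
      simp [Complex.exp_ofReal_mul_I_re]
    have him : (Complex.exp ((θ:ℂ) * Complex.I) - 1).im = Real.sin θ := by
      simp [Complex.exp_ofReal_mul_I_im]
    rw [Complex.norm_def, Complex.normSq_apply, hre, him]
    rw [show (Real.cos θ - 1) * (Real.cos θ - 1) + Real.sin θ * Real.sin θ
        = 2 - 2 * Real.cos θ by
      have := Real.sin_sq_add_cos_sq θ; nlinarith [this]]
    rw [Real.le_sqrt (by positivity) (by linarith [Real.cos_le_one θ])]
    have hcos := Real.cos_le_one_sub_mul_cos_sq hθpi
    have hsq : |θ|^2 = θ^2 := sq_abs θ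
    have hπ2 : (0:ℝ) < Real.pi^2 := by positivity
    rw [div_mul_eq_mul_div, div_pow]
    rw [div_le_iff₀ hπ2]
    have h6 : 2 / Real.pi ^ 2 * θ ^ 2 * Real.pi ^ 2 = 2 * θ ^ 2 := by
      field_simp
    have h8 : Real.cos θ * Real.pi^2 ≤ Real.pi^2 - 2*θ^2 := by
      calc Real.cos θ * Real.pi^2 ≤ (1 - 2/Real.pi^2 * θ^2) * Real.pi^2 :=
            mul_le_mul_of_nonneg_right hcos hπ2.le
        _ = Real.pi^2 - 2/Real.pi^2*θ^2*Real.pi^2 := by ring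
        _ = Real.pi^2 - 2*θ^2 := by rw [h6]
    calc (2 * |θ|)^2 = 4*θ^2 := by rw [mul_pow, hsq]; ring
      _ ≤ (2 - 2*Real.cos θ) * Real.pi^2 := by
          rw [show (2 - 2*Real.cos θ) * Real.pi^2
              = 2*Real.pi^2 - 2*(Real.cos θ * Real.pi^2) from by ring]
          linarith [h8]
  -- assemble
  have hθ0 : 0 < |θ| := by rw [hθabs]; positivity
  have h1 : ‖S‖ * (2 / Real.pi * |θ|) ≤ (7*lam)^d * (L / lam) := by
    calc ‖S‖ * (2 / Real.pi * |θ|)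
        ≤ ‖S‖ * ‖Complex.exp ((θ:ℂ) * Complex.I) - 1‖ :=
          mul_le_mul_of_nonneg_left hlow (norm_nonneg _)
      _ = ‖S * (Complex.exp (((x j / lam : ℝ):ℂ) * Complex.I) - 1)‖ := by
          rw [norm_mul]
      _ ≤ (7*lam)^d * (L / lam) := hdiff
  have h2 : ‖S‖ * |x j| ≤ Real.pi / 2 * ((7*lam)^d * (L / lam)) * lam := by
    have h3 := mul_le_mul_of_nonneg_left h1 (le_of_lt (by positivity : (0:ℝ) < Real.pi * lam / 2))
    have e1 : Real.pi * lam / 2 * (‖S‖ * (2 / Real.pi * |θ|))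
        = ‖S‖ * |x j| := by
      have hπ0 : Real.pi ≠ 0 := ne_of_gt hπ
      have hl0 : lam ≠ 0 := ne_of_gt hlam0
      rw [hθabs]
      rw [show Real.pi * lam / 2 * (‖S‖ * (2 / Real.pi * (|x j| / lam)))
          = ‖S‖ * |x j| * (Real.pi * lam / 2 * (2 / Real.pi * (1 / lam))) from by ring]
      rw [show Real.pi * lam / 2 * (2 / Real.pi * (1 / lam)) = 1 from by field_simp]
      rw [mul_one]
    have e2 : Real.pi * lam / 2 * ((7*lam)^d * (L / lam))
        = Real.pi / 2 * ((7*lam)^d * (L / lam)) * lam := by ring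
    rw [e1, e2] at h3
    exact h3
  -- final computation
  have hprefS : ‖(((1 / (2 * Real.pi * lam)) ^ d : ℝ) : ℂ) * S‖
      = (1 / (2 * Real.pi * lam))^d * ‖S‖ := by
    rw [norm_mul, Complex.norm_real, Real.norm_of_nonneg (by positivity)]
  have hgoal : |x j| * ‖(((1 / (2 * Real.pi * lam)) ^ d : ℝ) : ℂ) * S‖
      ≤ Real.pi / 2 * (7 / (2 * Real.pi)) ^ d * L := by
    rw [hprefS]
    have key : (1 / (2 * Real.pi * lam))^d * ((7*lam)^d * (L/lam)) * lam
        = (7 / (2 * Real.pi)) ^ d * L := by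
      have hl0 : lam ≠ 0 := ne_of_gt hlam0
      rw [show (1 / (2 * Real.pi * lam))^d * ((7*lam)^d * (L/lam)) * lam
          = (1 / (2 * Real.pi * lam))^d * (7*lam)^d * (L/lam*lam) from by ring]
      rw [← mul_pow, div_mul_cancel₀ L hl0]
      have hc : 1 / (2 * Real.pi * lam) * (7 * lam) = 7 / (2 * Real.pi) := by
        field_simp
      rw [hc]
    calc |x j| * ((1 / (2 * Real.pi * lam))^d * ‖S‖)
        = (1 / (2 * Real.pi * lam))^d * (‖S‖ * |x j|) := by ring
      _ ≤ (1 / (2 * Real.pi * lam))^d * (Real.pi / 2 * ((7*lam)^d * (L / lam)) * lam) :=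
          mul_le_mul_of_nonneg_left h2 (by positivity)
      _ = Real.pi / 2 * ((1 / (2 * Real.pi * lam))^d * ((7*lam)^d * (L/lam)) * lam) := by ring
      _ = Real.pi / 2 * ((7 / (2 * Real.pi)) ^ d * L) := by rw [key]
      _ = Real.pi / 2 * (7 / (2 * Real.pi)) ^ d * L := by ring
  exact hgoal
end
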